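/- Let Y₁ and Y₂ be real-valued random variables with Y₁ > 0 and Y₂ > 0 almost surely, let b > 0, set R = Y₂ / Y₁^b and Z = (log Y₁, log Y₂), and let p ∈ (0,1). If y₁ > 0 and y₂ > 0 are real numbers with y₂ / y₁^b < Q_R(p), then the point (log y₁, log y₂) does not belong to the directional quantile envelope D(p) of Z (subnormal-ratio part of Corollary 2: the tangent half-space of points with R < Q_R(p) is disjoint from D(p)). -/

import Mathlib

open MeasureTheory Real
open scoped ENNReal

/-- The quantile function `Q_X(p) = inf {x : P(X <= x) >= p}`. -/
noncomputable def quantileFn {Ω : Type*} [MeasurableSpace Ω] (μ : MeasureTheory.Measure Ω)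
    (X : Ω → ℝ) (p : ℝ) : ℝ :=
  sInf {x : ℝ | ENNReal.ofReal p ≤ μ {ω | X ω ≤ x}}

/-- The `p`-th directional quantile envelope of a random vector `W` with values in `ℝ^K`:
the intersection over unit directions `d` of the half-spaces
`{w : ⟨d, w⟩ ≥ Q_{⟨d,W⟩}(p)}`. -/
noncomputable def dqe {Ω : Type*} [MeasurableSpace Ω] (μ : MeasureTheory.Measure Ω) {K : ℕ}
    (W : Ω → EuclideanSpace ℝ (Fin K)) (p : ℝ) : Set (EuclideanSpace ℝ (Fin K)) :=
  ⋂ (d : EuclideanSpace ℝ (Fin K)) (_ : ‖d‖ = 1),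
    {w : EuclideanSpace ℝ (Fin K) | quantileFn μ (fun ω => (inner ℝ d (W ω) : ℝ)) p ≤ (inner ℝ d w : ℝ)}

/-!
Take the unit normal `d = (-b, 1) / √(b² + 1)` of the lines `log y₂ - b log y₁ = const`.
Then `⟨d, Z⟩ = log R / √(b² + 1)` almost surely, an increasing function of `R`, and
`⟨d, (log y₁, log y₂)⟩ = log (y₂ / y₁ ^ b) / √(b² + 1)`. If the point were in `D(p)`,
the `d`-quantile of `Z` would lie below `log q / √(b² + 1)` for some `q` with
`y₂ / y₁ ^ b < q < Q_R(p)`, so `P(R ≤ q) ≥ p`, i.e. `Q_R(p) ≤ q`: a contradiction.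
-/

section Quantile

variable {Ω : Type*} [MeasurableSpace Ω] {μ : Measure Ω}

theorem nonempty_quantileFn_set [IsProbabilityMeasure μ] (X : Ω → ℝ) {p : ℝ} (hp : p < 1) :
    {x : ℝ | ENNReal.ofReal p ≤ μ {ω | X ω ≤ x}}.Nonempty := by
  have hmono : Monotone fun n : ℕ => {ω | X ω ≤ n} := fun _ _ hmn =>
    Set.ofPred_subset_ofPred.2 fun _ hω => hω.trans (Nat.cast_le.2 hmn)
  have hunion : (⋃ n : ℕ, {ω | X ω ≤ n}) = Set.univ :=
    Set.eq_univ_of_forall fun ω => Set.mem_iUnion.2 (exists_nat_ge (X ω))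
  have hsup : ⨆ n : ℕ, μ {ω | X ω ≤ n} = 1 := by
    rw [← hmono.measure_iUnion, hunion, measure_univ]
  obtain ⟨n, hn⟩ := lt_iSup_iff.1 (hsup ▸ ENNReal.ofReal_lt_one.2 hp)
  exact ⟨n, hn.le⟩

theorem ofReal_le_measure_le_of_quantileFn_lt [IsProbabilityMeasure μ] {X : Ω → ℝ} {p t : ℝ}
    (hp : p < 1) (h : quantileFn μ X p < t) : ENNReal.ofReal p ≤ μ {ω | X ω ≤ t} := by
  obtain ⟨s, hs, hst⟩ := exists_lt_of_csInf_lt (nonempty_quantileFn_set X hp) h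
  exact hs.trans (measure_mono fun ω hω => le_trans hω hst.le)

theorem quantileFn_le_of_ofReal_le_measure {X : Ω → ℝ} {p a t : ℝ} (hp : 0 < p)
    (hX : ∀ᵐ ω ∂μ, a ≤ X ω) (h : ENNReal.ofReal p ≤ μ {ω | X ω ≤ t}) :
    quantileFn μ X p ≤ t := by
  refine csInf_le ⟨a, fun x hx => ?_⟩ h
  by_contra! hxa
  have hnull : μ {ω | X ω ≤ x} = 0 :=
    measure_mono_null (fun ω hω => not_le.2 (lt_of_le_of_lt hω hxa)) (ae_iff.1 hX)
  exact (ENNReal.ofReal_pos.2 hp).not_ge (hnull ▸ hx)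

theorem quantileFn_le_of_quantileFn_lt [IsProbabilityMeasure μ] {X Y : Ω → ℝ} {p a s t : ℝ}
    (hp : p ∈ Set.Ioo 0 1) (hY : ∀ᵐ ω ∂μ, a ≤ Y ω) (hXY : ∀ᵐ ω ∂μ, X ω ≤ s → Y ω ≤ t)
    (hX : quantileFn μ X p < s) : quantileFn μ Y p ≤ t :=
  quantileFn_le_of_ofReal_le_measure hp.1 hY <|
    (ofReal_le_measure_le_of_quantileFn_lt hp.2 hX).trans (measure_mono_ae hXY)

theorem quantileFn_inner_le_of_mem_dqe {K : ℕ} {W : Ω → EuclideanSpace ℝ (Fin K)} {p : ℝ}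
    {w d : EuclideanSpace ℝ (Fin K)} (hw : w ∈ dqe μ W p) (hd : ‖d‖ = 1) :
    quantileFn μ (fun ω => inner ℝ d (W ω)) p ≤ inner ℝ d w :=
  Set.mem_iInter₂.1 hw d hd

end Quantile

section AllometricDirection

noncomputable def allometricDirection (b : ℝ) : EuclideanSpace ℝ (Fin 2) :=
  WithLp.toLp 2 ![-b / √(b ^ 2 + 1), 1 / √(b ^ 2 + 1)]

theorem norm_allometricDirection (b : ℝ) : ‖allometricDirection b‖ = 1 := by
  simp only [allometricDirection, EuclideanSpace.norm_eq, Fin.sum_univ_two, Real.norm_eq_abs,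
    sq_abs, Matrix.cons_val_zero, Matrix.cons_val_one]
  rw [div_pow, div_pow, ← add_div, Real.sq_sqrt (by positivity), neg_sq, one_pow,
    div_self (by positivity), Real.sqrt_one]

theorem inner_allometricDirection (b : ℝ) {u v : ℝ} (hu : 0 < u) (hv : 0 < v) :
    inner ℝ (allometricDirection b) (WithLp.toLp 2 ![Real.log u, Real.log v]) =
      Real.log (v / u ^ b) / √(b ^ 2 + 1) := by
  rw [allometricDirection, EuclideanSpace.inner_toLp_toLp, Real.log_div hv.ne' (by positivity),
    Real.log_rpow hu]
  simp only [dotProduct, Fin.sum_univ_two, Matrix.cons_val_zero, Matrix.cons_val_one, star_trivial,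
    Pi.star_apply]
  ring

end AllometricDirection

theorem stmt3_general {Ω : Type*} [MeasurableSpace Ω] (μ : Measure Ω) [IsProbabilityMeasure μ]
    (Y₁ Y₂ : Ω → ℝ) (hY₁ : ∀ᵐ ω ∂μ, 0 < Y₁ ω) (hY₂ : ∀ᵐ ω ∂μ, 0 < Y₂ ω)
    (b : ℝ) (p : ℝ) (hp : p ∈ Set.Ioo (0 : ℝ) 1)
    (R : Ω → ℝ) (hR : R = fun ω => Y₂ ω / (Y₁ ω) ^ b)
    (Z : Ω → EuclideanSpace ℝ (Fin 2))
    (hZ : Z = fun ω => WithLp.toLp 2 ![Real.log (Y₁ ω), Real.log (Y₂ ω)])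
    (y₁ y₂ : ℝ) (hy₁ : 0 < y₁) (hy₂ : 0 < y₂)
    (hlt : y₂ / y₁ ^ b < quantileFn μ R p) :
    (WithLp.toLp 2 ![Real.log y₁, Real.log y₂] : EuclideanSpace ℝ (Fin 2)) ∉ dqe μ Z p := by
  subst hR hZ
  intro hmem
  set c := √(b ^ 2 + 1)
  have hc : 0 < c := by positivity
  obtain ⟨q, hrq, hqQ⟩ := exists_between hlt
  have hq : 0 < q := lt_trans (by positivity) hrq
  have hquantile := quantileFn_inner_le_of_mem_dqe hmem (norm_allometricDirection b)
  rw [inner_allometricDirection b hy₁ hy₂] at hquantile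
  have hlevel : ∀ᵐ ω ∂μ, inner ℝ (allometricDirection b) (WithLp.toLp 2
      ![Real.log (Y₁ ω), Real.log (Y₂ ω)]) ≤ Real.log q / c → Y₂ ω / Y₁ ω ^ b ≤ q := by
    filter_upwards [hY₁, hY₂] with ω h₁ h₂
    rw [inner_allometricDirection b h₁ h₂, div_le_div_iff_of_pos_right hc,
      Real.log_le_log_iff (by positivity) hq]
    exact id
  have hRnonneg : ∀ᵐ ω ∂μ, 0 ≤ Y₂ ω / Y₁ ω ^ b := by
    filter_upwards [hY₁, hY₂] with ω h₁ h₂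
    positivity
  have hQR : quantileFn μ _ p ≤ q :=
    quantileFn_le_of_quantileFn_lt hp hRnonneg hlevel <|
      hquantile.trans_lt <| div_lt_div_of_pos_right (Real.log_lt_log (by positivity) hrq) hc
  exact hQR.not_gt hqQ

theorem stmt3 {Ω : Type*} [MeasurableSpace Ω] (μ : Measure Ω) [IsProbabilityMeasure μ]
    (Y₁ Y₂ : Ω → ℝ) (hY₁ : ∀ᵐ ω ∂μ, 0 < Y₁ ω) (hY₂ : ∀ᵐ ω ∂μ, 0 < Y₂ ω)
    (b : ℝ) (hb : 0 < b) (p : ℝ) (hp : p ∈ Set.Ioo (0 : ℝ) 1)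
    (R : Ω → ℝ) (hR : R = fun ω => Y₂ ω / (Y₁ ω) ^ b)
    (Z : Ω → EuclideanSpace ℝ (Fin 2))
    (hZ : Z = fun ω => WithLp.toLp 2 ![Real.log (Y₁ ω), Real.log (Y₂ ω)])
    (y₁ y₂ : ℝ) (hy₁ : 0 < y₁) (hy₂ : 0 < y₂)
    (hlt : y₂ / y₁ ^ b < quantileFn μ R p) :
    (WithLp.toLp 2 ![Real.log y₁, Real.log y₂] : EuclideanSpace ℝ (Fin 2)) ∉ dqe μ Z p :=
  stmt3_general μ Y₁ Y₂ hY₁ hY₂ b p hp R hR Z hZ y₁ y₂ hy₁ hy₂ hlt
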